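/- arXiv:1008.3934 — 2 statements merged into one kernel-verified Lean document; each statement's English description precedes it below -/
import Mathlib

section
/- Let G be a finite connected simple graph with vertex set V and at least two vertices, and let J assign to each edge e of G a strictly positive real coupling J_e > 0 (couplings are zero on non-adjacent pairs). Let ⟨·⟩ be the associated zero-field Gibbs expectation. Then for all vertices u, v ∈ V, ⟨σ_u σ_v⟩ > 0. -/
/-!
High-temperature expansion. Since `σ_p σ_q = ±1`, each factor `exp (J_pq σ_p σ_q / 2)` equals
`cosh (J_pq / 2) + sinh (J_pq / 2) σ_p σ_q`. Expanding the product over ordered pairs writes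
the numerator of `⟨σ_u σ_v⟩` as a combination, with nonnegative coefficients
`∏_{T} sinh · ∏_{Tᶜ} cosh`, of the moments `∑_σ σ_u σ_v ∏_{(p,q) ∈ T} σ_p σ_q`. Each moment
factors over the vertices into terms `1 + (-1)^k ≥ 0`. For `T` the edges of a path from `u` to
`v` the summand is identically `1` and the coefficient is positive because `J > 0` on edges.
-/

open Finset

/-- The spin value (±1) associated to a Boolean configuration. -/
noncomputable def spin {V : Type*} (s : V → Bool) : V → ℝ :=
  fun p => if s p then 1 else -1

/-- Zero-field Boltzmann weight of a spin configuration for couplings `J`.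
When `J` is symmetric and vanishes on non-adjacent pairs, this is
`exp(Σ_{edges {i,j}} J i j σ_i σ_j)`. -/
noncomputable def zfWeight {V : Type*} [Fintype V] (J : V → V → ℝ) (s : V → Bool) : ℝ :=
  Real.exp ((1 / 2) * ∑ p, ∑ q, J p q * spin s p * spin s q)

/-- Zero-field Gibbs expectation of an observable `f` for couplings `J`. -/
noncomputable def zfExpect {V : Type*} [Fintype V] [DecidableEq V]
    (J : V → V → ℝ) (f : (V → ℝ) → ℝ) : ℝ :=
  (∑ s : V → Bool, f (spin s) * zfWeight J s) / ∑ s : V → Bool, zfWeight J s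

lemma spin_mul_self {V : Type*} (s : V → Bool) (p : V) : spin s p * spin s p = 1 := by
  unfold spin; split <;> norm_num

lemma prod_darts_mul_eq_of_mul_self {M V : Type*} [CommMonoid M] {G : SimpleGraph V}
    (f : V → M) (hf : ∀ p, f p * f p = 1) {a b : V} (w : G.Walk a b) :
    (w.darts.map fun d => f d.fst * f d.snd).prod = f a * f b := by
  induction w with
  | nil => simp [hf]
  | @cons x y z _ w ih =>
    rw [SimpleGraph.Walk.darts_cons, List.map_cons, List.prod_cons, ih]
    calc f x * f y * (f y * f z) = f x * (f y * f y) * f z := by simp only [mul_assoc]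
      _ = f x * f z := by rw [hf, mul_one]

lemma SimpleGraph.Walk.IsPath.prod_toFinset_darts {M V : Type*} [CommMonoid M] [DecidableEq V]
    {G : SimpleGraph V} (f : V → M) (hf : ∀ p, f p * f p = 1) {a b : V} {w : G.Walk a b}
    (hw : w.IsPath) :
    ∏ e ∈ (w.darts.map SimpleGraph.Dart.toProd).toFinset, f e.1 * f e.2 = f a * f b := by
  rw [List.prod_toFinset _ ((w.darts_nodup_of_support_nodup hw.support_nodup).map
    SimpleGraph.Dart.toProd_injective), List.map_map]
  exact prod_darts_mul_eq_of_mul_self f hf w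

lemma sum_prod_map_spin_nonneg {V : Type*} [Fintype V] [DecidableEq V] (m : Multiset V) :
    0 ≤ ∑ s : V → Bool, (m.map (spin s)).prod := by
  have hcount : ∀ s : V → Bool, (m.map (spin s)).prod = ∏ p, spin s p ^ m.count p := fun s => by
    rw [Finset.prod_multiset_map_count]
    exact Finset.prod_subset (subset_univ _) fun p _ hp => by
      rw [Multiset.count_eq_zero_of_notMem (Multiset.mem_toFinset.not.mp hp), pow_zero]
  calc 0 ≤ ∏ p, ∑ b : Bool, (if b then (1 : ℝ) else -1) ^ m.count p :=
        Finset.prod_nonneg fun p _ => by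
          rcases neg_one_pow_eq_or ℝ (m.count p) with h | h <;> simp [h]
    _ = ∑ s : V → Bool, (m.map (spin s)).prod := by
        rw [Fintype.prod_sum]
        exact Finset.sum_congr rfl fun s _ => (hcount s).symm

lemma sum_spin_mul_spin_mul_prod_nonneg {V : Type*} [Fintype V] [DecidableEq V] (u v : V)
    (T : Finset (V × V)) :
    0 ≤ ∑ s : V → Bool, spin s u * spin s v * ∏ e ∈ T, spin s e.1 * spin s e.2 := by
  convert sum_prod_map_spin_nonneg (u ::ₘ v ::ₘ T.val.bind fun e => {e.1, e.2}) using 2 with s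
  simp [Finset.prod_mul_distrib, mul_assoc]

lemma Real.exp_mul_eq_cosh_add_sinh_mul {a ε : ℝ} (hε : ε = 1 ∨ ε = -1) :
    Real.exp (a * ε) = Real.cosh a + Real.sinh a * ε := by
  rcases hε with rfl | rfl
  · rw [mul_one, mul_one, Real.cosh_add_sinh]
  · rw [mul_neg_one, mul_neg_one, ← Real.cosh_sub_sinh, sub_eq_add_neg]

lemma spin_mul_spin_eq_one_or {V : Type*} (s : V → Bool) (p q : V) :
    spin s p * spin s q = 1 ∨ spin s p * spin s q = -1 := by
  unfold spin; split <;> split <;> norm_num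

lemma zfWeight_eq_prod {V : Type*} [Fintype V] (J : V → V → ℝ) (s : V → Bool) :
    zfWeight J s = ∏ e : V × V, (Real.cosh (J e.1 e.2 / 2)
      + Real.sinh (J e.1 e.2 / 2) * (spin s e.1 * spin s e.2)) := by
  rw [zfWeight, ← Fintype.sum_prod_type', Finset.mul_sum, Real.exp_sum]
  refine Finset.prod_congr rfl fun e _ => ?_
  rw [← Real.exp_mul_eq_cosh_add_sinh_mul (spin_mul_spin_eq_one_or s e.1 e.2)]
  ring_nf

lemma sum_mul_prod_add_pos {Ω ι R : Type*} [Fintype Ω] [Fintype ι]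
    [CommRing R] [LinearOrder R] [IsStrictOrderedRing R] (f : Ω → R) (x : ι → Ω → R)
    (a b : ι → R) (ha : ∀ i, 0 < a i) (hb : ∀ i, 0 ≤ b i)
    (hmoment : ∀ T : Finset ι, 0 ≤ ∑ ω, f ω * ∏ i ∈ T, x i ω)
    (T₀ : Finset ι) (hbT₀ : ∀ i ∈ T₀, 0 < b i) (hT₀ : 0 < ∑ ω, f ω * ∏ i ∈ T₀, x i ω) :
    0 < ∑ ω, f ω * ∏ i, (a i + b i * x i ω) := by
  classical
  have hexpand : ∀ ω, f ω * ∏ i, (a i + b i * x i ω) =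
      ∑ T : Finset ι, ((∏ i ∈ T, b i) * ∏ i ∈ Tᶜ, a i) * (f ω * ∏ i ∈ T, x i ω) := fun ω => by
    simp_rw [add_comm (a _), Fintype.prod_add, Finset.mul_sum, Finset.prod_mul_distrib]
    exact Finset.sum_congr rfl fun T _ => by ring
  simp_rw [hexpand]
  rw [Finset.sum_comm]
  simp_rw [← Finset.mul_sum]
  have hcoeff : ∀ T : Finset ι, 0 ≤ (∏ i ∈ T, b i) * ∏ i ∈ Tᶜ, a i := fun T =>
    mul_nonneg (Finset.prod_nonneg fun i _ => hb i) (Finset.prod_nonneg fun i _ => (ha i).le)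
  refine Finset.sum_pos' (fun T _ => mul_nonneg (hcoeff T) (hmoment T)) ⟨T₀, mem_univ _, ?_⟩
  exact mul_pos (mul_pos (Finset.prod_pos hbT₀) (Finset.prod_pos fun i _ => ha i)) hT₀

theorem two_point_positive_general {V : Type*} [Fintype V] [DecidableEq V]
    (G : SimpleGraph V) (hconn : G.Connected)
    (J : V → V → ℝ)
    (hzero : ∀ p q, ¬G.Adj p q → J p q = 0)
    (hpos : ∀ p q, G.Adj p q → 0 < J p q)
    (u v : V) :
    0 < zfExpect J (fun σ => σ u * σ v) := by
  have hJ : ∀ p q, 0 ≤ J p q := fun p q => by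
    by_cases h : G.Adj p q
    · exact (hpos p q h).le
    · exact (hzero p q h).ge
  obtain ⟨path, hpath⟩ := ((hconn.preconnected u v).some.toPath : G.Path u v)
  refine div_pos ?_ (Finset.sum_pos (fun s _ => Real.exp_pos _) univ_nonempty)
  simp only [zfWeight_eq_prod]
  refine sum_mul_prod_add_pos _ _ _ _ (fun _ => Real.cosh_pos _)
    (fun e => Real.sinh_nonneg_iff.mpr (div_nonneg (hJ e.1 e.2) zero_le_two))
    (sum_spin_mul_spin_mul_prod_nonneg u v) (path.darts.map SimpleGraph.Dart.toProd).toFinset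
    (fun e he => ?_) ?_
  · obtain ⟨d, -, rfl⟩ := List.mem_map.mp (List.mem_toFinset.mp he)
    exact Real.sinh_pos_iff.mpr (half_pos (hpos _ _ d.adj))
  · simp only [hpath.prod_toFinset_darts _ (spin_mul_self _), mul_mul_mul_comm (spin _ u),
      spin_mul_self, mul_one, sum_const, card_univ, nsmul_one]
    exact_mod_cast Fintype.card_pos

/-- On a finite connected graph with strictly positive ferromagnetic couplings,
all two-point functions `⟨σ_u σ_v⟩` are strictly positive. -/
theorem two_point_positive {V : Type*} [Fintype V] [DecidableEq V]
    (hcard : 2 ≤ Fintype.card V)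
    (G : SimpleGraph V) (hconn : G.Connected)
    (J : V → V → ℝ)
    (hsymm : ∀ p q, J p q = J q p)
    (hzero : ∀ p q, ¬G.Adj p q → J p q = 0)
    (hpos : ∀ p q, G.Adj p q → 0 < J p q)
    (u v : V) :
    0 < zfExpect J (fun σ => σ u * σ v) :=
  two_point_positive_general G hconn J hzero hpos u v
end

section
/- Let V be a nonempty finite set and let J : V → V → ℝ be symmetric with zero diagonal and J_{pq} ≥ 0 for all p, q. For β ≥ 0 let ⟨·⟩_β denote the zero-field Gibbs expectation with couplings β·J (Boltzmann weight exp((β/2)·Σ_{p,q} J_{pq} σ_p σ_q)). Then for any two vertices i, j ∈ V, the function β ↦ ⟨σ_i σ_j⟩_β is monotone nondecreasing on [0, ∞); moreover ⟨σ_i σ_j⟩_0 = 0 when i ≠ j, so ⟨σ_i σ_j⟩_β ≥ 0 for all β ≥ 0. -/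
open Finset

lemma spin_cases {V : Type*} (s : V → Bool) (p : V) : spin s p = 1 ∨ spin s p = -1 := by
  unfold spin; cases s p <;> simp

lemma spin_beq {V : Type*} (s ε : V → Bool) (p : V) :
    spin (fun q => s q == ε q) p = spin s p * spin ε p := by
  unfold spin; cases h1 : s p <;> cases h2 : ε p <;> simp [h1, h2]

lemma sum_spin_pow_nonneg {V : Type*} [Fintype V] [DecidableEq V] (e : V → ℕ) :
    0 ≤ ∑ s : V → Bool, ∏ p, (spin s p) ^ (e p) := by
  have h : (∑ s : V → Bool, ∏ p, (spin s p) ^ (e p))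
      = ∏ p, ∑ b : Bool, (if b then (1:ℝ) else -1) ^ (e p) := by
    rw [Fintype.prod_sum (fun p (b : Bool) => (if b then (1:ℝ) else -1) ^ e p)]
    rfl
  rw [h]
  apply Finset.prod_nonneg
  intro p _
  rw [Fintype.sum_bool]
  rcases Nat.even_or_odd (e p) with he | he
  · simp [he.neg_one_pow]
  · simp [he.neg_one_pow]

lemma spin_eq_prod {V : Type*} [Fintype V] [DecidableEq V] (s : V → Bool) (i : V) :
    spin s i = ∏ p, (spin s p) ^ (if p = i then 1 else 0) := by
  have : ∀ p : V, (spin s p) ^ (if p = i then 1 else 0) = if p = i then spin s p else 1 := by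
    intro p; by_cases h : p = i <;> simp [h]
  rw [Finset.prod_congr rfl (fun p _ => this p), Finset.prod_ite_eq' Finset.univ i (spin s)]
  simp

lemma prod_fst_eq {V : Type*} [Fintype V] [DecidableEq V] (s : V → Bool) (u : Finset (V × V)) :
    (∏ z ∈ u, spin s z.1) = ∏ p, (spin s p) ^ (u.filter (fun z => z.1 = p)).card := by
  rw [← Finset.prod_fiberwise' u (fun z => z.1) (fun p => spin s p)]
  exact Finset.prod_congr rfl fun p _ => by rw [Finset.prod_const]

lemma prod_snd_eq {V : Type*} [Fintype V] [DecidableEq V] (s : V → Bool) (u : Finset (V × V)) :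
    (∏ z ∈ u, spin s z.2) = ∏ p, (spin s p) ^ (u.filter (fun z => z.2 = p)).card := by
  rw [← Finset.prod_fiberwise' u (fun z => z.2) (fun p => spin s p)]
  exact Finset.prod_congr rfl fun p _ => by rw [Finset.prod_const]

lemma sum_spin_monomial_nonneg {V : Type*} [Fintype V] [DecidableEq V]
    (i j : V) (u : Finset (V × V)) :
    0 ≤ ∑ s : V → Bool, spin s i * spin s j * ∏ z ∈ u, (spin s z.1 * spin s z.2) := by
  have hrep : ∀ s : V → Bool,
      spin s i * spin s j * ∏ z ∈ u, (spin s z.1 * spin s z.2)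
        = ∏ p, (spin s p) ^ (((if p = i then 1 else 0) + (if p = j then 1 else 0))
            + ((u.filter (fun z => z.1 = p)).card + (u.filter (fun z => z.2 = p)).card)) := by
    intro s
    rw [Finset.prod_mul_distrib, prod_fst_eq, prod_snd_eq, spin_eq_prod s i, spin_eq_prod s j,
      ← Finset.prod_mul_distrib, ← Finset.prod_mul_distrib, ← Finset.prod_mul_distrib]
    exact Finset.prod_congr rfl fun p _ => by rw [pow_add, pow_add, pow_add]
  calc (0:ℝ) ≤ ∑ s : V → Bool, ∏ p, (spin s p) ^ (((if p = i then 1 else 0) + (if p = j then 1 else 0))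
            + ((u.filter (fun z => z.1 = p)).card + (u.filter (fun z => z.2 = p)).card)) :=
        sum_spin_pow_nonneg _
    _ = _ := (Finset.sum_congr rfl fun s _ => (hrep s).symm)

lemma exp_mul_pm (c x : ℝ) (hx : x = 1 ∨ x = -1) :
    Real.exp (c * x) = Real.cosh c + Real.sinh c * x := by
  rcases hx with h | h <;> subst h
  · rw [mul_one, mul_one, Real.cosh_add_sinh]
  · rw [mul_neg_one, mul_neg_one, ← sub_eq_add_neg, Real.cosh_sub_sinh]

/-- Griffiths' first inequality for the two-point function. -/
lemma griffithsI {V : Type*} [Fintype V] [DecidableEq V]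
    (K : V → V → ℝ) (hK : ∀ p q, 0 ≤ K p q) (i j : V) :
    0 ≤ ∑ s : V → Bool, spin s i * spin s j *
      Real.exp ((1 / 2) * ∑ p, ∑ q, K p q * spin s p * spin s q) := by
  have hw : ∀ s : V → Bool,
      Real.exp ((1 / 2) * ∑ p, ∑ q, K p q * spin s p * spin s q)
      = ∑ t : Finset (V × V), (∏ z ∈ t, Real.cosh (K z.1 z.2 / 2)) *
          ((∏ z ∈ tᶜ, Real.sinh (K z.1 z.2 / 2)) * ∏ z ∈ tᶜ, (spin s z.1 * spin s z.2)) := by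
    intro s
    have h1 : (1 / 2) * ∑ p, ∑ q, K p q * spin s p * spin s q
        = ∑ z : V × V, K z.1 z.2 / 2 * (spin s z.1 * spin s z.2) := by
      rw [Fintype.sum_prod_type]
      simp only [Finset.mul_sum]
      exact Finset.sum_congr rfl fun p _ => Finset.sum_congr rfl fun q _ => by ring
    rw [h1, Real.exp_sum]
    have h2 : ∀ z : V × V, z ∈ (Finset.univ : Finset (V × V)) →
        Real.exp (K z.1 z.2 / 2 * (spin s z.1 * spin s z.2))
        = Real.cosh (K z.1 z.2 / 2) + Real.sinh (K z.1 z.2 / 2) * (spin s z.1 * spin s z.2) := by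
      intro z _
      apply exp_mul_pm
      rcases spin_cases s z.1 with h | h <;> rcases spin_cases s z.2 with h' | h' <;>
        rw [h, h'] <;> norm_num
    rw [Finset.prod_congr rfl h2, Fintype.prod_add]
    exact Finset.sum_congr rfl fun t _ => by rw [Finset.prod_mul_distrib]
  calc (0:ℝ) ≤ ∑ t : Finset (V × V), ((∏ z ∈ t, Real.cosh (K z.1 z.2 / 2)) *
          (∏ z ∈ tᶜ, Real.sinh (K z.1 z.2 / 2))) *
          ∑ s : V → Bool, spin s i * spin s j * ∏ z ∈ tᶜ, (spin s z.1 * spin s z.2) := by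
        apply Finset.sum_nonneg
        intro t _
        apply mul_nonneg
        · apply mul_nonneg
          · exact Finset.prod_nonneg fun z _ => (Real.cosh_pos _).le
          · refine Finset.prod_nonneg fun z _ => ?_
            have h0 : (0:ℝ) ≤ K z.1 z.2 / 2 := div_nonneg (hK _ _) (by norm_num)
            simpa using Real.sinh_le_sinh.mpr h0
        · exact sum_spin_monomial_nonneg i j tᶜ
    _ = ∑ s : V → Bool, spin s i * spin s j *
          Real.exp ((1 / 2) * ∑ p, ∑ q, K p q * spin s p * spin s q) := by
        symm
        simp only [hw]
        simp only [Finset.mul_sum]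
        rw [Finset.sum_comm]
        refine Finset.sum_congr rfl fun t _ => ?_
        exact Finset.sum_congr rfl fun s _ => by ring

/-- For ferromagnetic couplings `J ≥ 0`, the two-point function
`β ↦ ⟨σ_i σ_j⟩_β` (couplings `β·J`) is monotone nondecreasing on `[0, ∞)`; at `β = 0`
it vanishes for `i ≠ j`, hence it is nonnegative for all `β ≥ 0`. -/
theorem two_point_monotone_in_beta {V : Type*} [Fintype V] [DecidableEq V] [Nonempty V]
    (J : V → V → ℝ)
    (hsymm : ∀ p q, J p q = J q p) (hdiag : ∀ p, J p p = 0)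
    (hJ : ∀ p q, 0 ≤ J p q)
    (i j : V) :
    MonotoneOn (fun β : ℝ => zfExpect (fun p q => β * J p q) (fun σ => σ i * σ j))
      (Set.Ici (0 : ℝ)) ∧
    (i ≠ j → zfExpect (fun p q => (0 : ℝ) * J p q) (fun σ => σ i * σ j) = 0) ∧
    ∀ β : ℝ, 0 ≤ β → 0 ≤ zfExpect (fun p q => β * J p q) (fun σ => σ i * σ j) := by
  have hZ : ∀ β : ℝ, 0 < ∑ s : V → Bool, zfWeight (fun p q => β * J p q) s :=
    fun β => Finset.sum_pos (fun s _ => Real.exp_pos _) Finset.univ_nonempty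
  have hN : ∀ β : ℝ, 0 ≤ β →
      0 ≤ ∑ s : V → Bool, spin s i * spin s j * zfWeight (fun p q => β * J p q) s := by
    intro β hβ
    exact griffithsI (fun p q => β * J p q) (fun p q => mul_nonneg hβ (hJ p q)) i j
  -- key correlation inequality (Ginibre's duplication trick)
  have hkey : ∀ a b : ℝ, 0 ≤ a → a ≤ b →
      (∑ s : V → Bool, spin s i * spin s j * zfWeight (fun p q => a * J p q) s) *
        (∑ s : V → Bool, zfWeight (fun p q => b * J p q) s)
      ≤ (∑ s : V → Bool, spin s i * spin s j * zfWeight (fun p q => b * J p q) s) *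
        (∑ s : V → Bool, zfWeight (fun p q => a * J p q) s) := by
    intro a b ha hab
    rw [← sub_nonneg]
    have hws : ∀ s ε : V → Bool,
        zfWeight (fun p q => b * J p q) s *
          zfWeight (fun p q => a * J p q) (fun r => s r == ε r)
        = Real.exp ((1 / 2) * ∑ p, ∑ q,
            (J p q * (b + a * (spin ε p * spin ε q))) * spin s p * spin s q) := by
      intro s ε
      unfold zfWeight
      rw [← Real.exp_add]
      congr 1
      rw [← mul_add]
      congr 1
      rw [← Finset.sum_add_distrib]
      refine Finset.sum_congr rfl fun p _ => ?_
      rw [← Finset.sum_add_distrib]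
      refine Finset.sum_congr rfl fun q _ => ?_
      rw [spin_beq, spin_beq]
      ring
    have hperm : ∀ (s : V → Bool) (F : (V → Bool) → ℝ),
        ∑ t : V → Bool, F t = ∑ ε : V → Bool, F (fun p => s p == ε p) := by
      intro s F
      have hinv : Function.Involutive (fun ε : V → Bool => fun p => s p == ε p) := by
        intro ε; funext p; cases h1 : s p <;> cases h2 : ε p <;> simp [h1, h2]
      rw [← Equiv.sum_comp hinv.toPerm F]
      rfl
    have e1 :
        (∑ s : V → Bool, spin s i * spin s j * zfWeight (fun p q => b * J p q) s) *
          (∑ s : V → Bool, zfWeight (fun p q => a * J p q) s)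
        - (∑ s : V → Bool, spin s i * spin s j * zfWeight (fun p q => a * J p q) s) *
          (∑ s : V → Bool, zfWeight (fun p q => b * J p q) s)
        = ∑ s : V → Bool, ∑ t : V → Bool,
            (spin s i * spin s j * zfWeight (fun p q => b * J p q) s *
              zfWeight (fun p q => a * J p q) t
            - spin t i * spin t j * zfWeight (fun p q => a * J p q) t *
              zfWeight (fun p q => b * J p q) s) := by
      rw [Finset.sum_mul_sum,
        mul_comm (∑ s : V → Bool, spin s i * spin s j * zfWeight (fun p q => a * J p q) s)
          (∑ s : V → Bool, zfWeight (fun p q => b * J p q) s),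
        Finset.sum_mul_sum, ← Finset.sum_sub_distrib]
      refine Finset.sum_congr rfl fun s _ => ?_
      rw [← Finset.sum_sub_distrib]
      exact Finset.sum_congr rfl fun t _ => by ring
    rw [e1]
    have e2 : ∀ s : V → Bool,
        (∑ t : V → Bool,
            (spin s i * spin s j * zfWeight (fun p q => b * J p q) s *
              zfWeight (fun p q => a * J p q) t
            - spin t i * spin t j * zfWeight (fun p q => a * J p q) t *
              zfWeight (fun p q => b * J p q) s))
        = ∑ ε : V → Bool,
            (spin s i * spin s j * zfWeight (fun p q => b * J p q) s *
              zfWeight (fun p q => a * J p q) (fun r => s r == ε r)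
            - spin (fun r => s r == ε r) i * spin (fun r => s r == ε r) j *
              zfWeight (fun p q => a * J p q) (fun r => s r == ε r) *
              zfWeight (fun p q => b * J p q) s) := by
      intro s
      exact hperm s _
    rw [Finset.sum_congr rfl fun s _ => e2 s, Finset.sum_comm]
    apply Finset.sum_nonneg
    intro ε _
    have e3 : (∑ s : V → Bool,
            (spin s i * spin s j * zfWeight (fun p q => b * J p q) s *
              zfWeight (fun p q => a * J p q) (fun r => s r == ε r)
            - spin (fun r => s r == ε r) i * spin (fun r => s r == ε r) j *
              zfWeight (fun p q => a * J p q) (fun r => s r == ε r) *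
              zfWeight (fun p q => b * J p q) s))
        = (1 - spin ε i * spin ε j) * ∑ s : V → Bool, spin s i * spin s j *
            Real.exp ((1 / 2) * ∑ p, ∑ q,
              (J p q * (b + a * (spin ε p * spin ε q))) * spin s p * spin s q) := by
      rw [Finset.mul_sum]
      refine Finset.sum_congr rfl fun s _ => ?_
      rw [← hws s ε, spin_beq, spin_beq]
      ring
    rw [e3]
    apply mul_nonneg
    · rcases spin_cases ε i with h | h <;> rcases spin_cases ε j with h' | h' <;>
        rw [h, h'] <;> norm_num
    · refine griffithsI (fun p q => J p q * (b + a * (spin ε p * spin ε q))) ?_ i j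
      intro p q
      apply mul_nonneg (hJ p q)
      rcases spin_cases ε p with h | h <;> rcases spin_cases ε q with h' | h' <;>
        rw [h, h'] <;> nlinarith
  refine ⟨?_, ?_, ?_⟩
  · -- monotonicity
    intro x hx y hy hxy
    simp only [Set.mem_Ici] at hx hy
    show zfExpect (fun p q => x * J p q) (fun σ => σ i * σ j)
        ≤ zfExpect (fun p q => y * J p q) (fun σ => σ i * σ j)
    unfold zfExpect
    rw [div_le_div_iff₀ (hZ x) (hZ y)]
    exact hkey x y hx hxy
  · -- value at zero
    intro hij
    have hw0 : ∀ s : V → Bool, zfWeight (fun p q => (0:ℝ) * J p q) s = 1 := by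
      intro s; unfold zfWeight; simp
    have hflip : Function.Involutive
        (fun s : V → Bool => Function.update s i (!(s i))) := by
      intro s; funext p
      by_cases hp : p = i
      · subst hp; simp
      · simp [Function.update_of_ne hp]
    have hneg : ∀ s : V → Bool,
        spin (Function.update s i (!(s i))) i * spin (Function.update s i (!(s i))) j
          = -(spin s i * spin s j) := by
      intro s
      have h1 : spin (Function.update s i (!(s i))) i = -spin s i := by
        unfold spin; cases h : s i <;> simp [h]
      have h2 : spin (Function.update s i (!(s i))) j = spin s j := by
        unfold spin; rw [Function.update_of_ne (Ne.symm hij)]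
      rw [h1, h2]; ring
    have hzero : (∑ s : V → Bool, spin s i * spin s j) = 0 := by
      have hsum := Equiv.sum_comp hflip.toPerm
        (fun s : V → Bool => spin s i * spin s j)
      simp only [Function.Involutive.coe_toPerm] at hsum
      have hsum2 : (∑ s : V → Bool, -(spin s i * spin s j))
          = ∑ s : V → Bool, spin s i * spin s j := by
        rw [← hsum]
        exact Finset.sum_congr rfl fun s _ => (hneg s).symm
      rw [Finset.sum_neg_distrib] at hsum2
      linarith
    unfold zfExpect
    simp only [hw0, mul_one]
    rw [show (∑ s : V → Bool, spin s i * spin s j) = 0 from hzero]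
    · simp
  · -- nonnegativity
    intro β hβ
    unfold zfExpect
    exact div_nonneg (hN β hβ) (hZ β).le
end
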